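/- arXiv:1509.02449 — 4 statements merged into one kernel-verified Lean document; each statement's English description precedes it below -/
import Mathlib

section
/- Let k be a complete nonarchimedean field with nontrivial dense valuation and let ‖·‖ denote the Gauss norm on the Tate algebra k{t₁,…,tₙ}. If A is a quotient of the Tate algebra by a closed ideal, equipped with the residue (quotient) seminorm, then for every element f of the quotient the infimum defining the residue seminorm is attained; in particular, the residue seminorm takes values in the value group |k| of k. -/
open Filter

/-- The Gauss norm of a multivariate power series: the supremum of the absolute values of
its coefficients (finite on elements of the Tate algebra). -/
noncomputable def gaussNorm (k : Type*) [NontriviallyNormedField k] (n : ℕ)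
    (f : MvPowerSeries (Fin n) k) : ℝ :=
  sSup (Set.range fun d : Fin n →₀ ℕ => ‖MvPowerSeries.coeff d f‖)

/-- The Tate algebra `k{t₁,…,tₙ}`: power series whose coefficients tend to `0`. -/
def tateAlgebra (k : Type*) [NontriviallyNormedField k] (n : ℕ) :
    Set (MvPowerSeries (Fin n) k) :=
  {f | Tendsto (fun d : Fin n →₀ ℕ => ‖MvPowerSeries.coeff d f‖) cofinite (nhds 0)}

/-!
Call `γ` a leading exponent of a nonzero `h` if `‖h_γ‖ = ‖h‖` and `γ` is lexicographically
largest with this property. By Dickson's lemma the minimal leading exponents `α` of `I` are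
finitely many and lie below all others; rescaling gives reducers `h_α ∈ I` with `h_α(α) = 1`,
all coefficients of norm `≤ 1` and, beyond `α` in lex order, of norm `≤ θ` for one `θ < 1`.
Subtracting `c t^β h_α` clears the coefficient at a leading exponent `γ = α + β` and lifts
coefficients above `θ ‖c‖` only at exponents lex-smaller than `γ`, so a well-founded reduction
along the lex order shrinks all coefficients of `f` at leading exponents by the factor `θ`.
Iterating converges coefficientwise since `k` is complete, and closedness of `I` yields
`ρ ∈ f + I` vanishing at every leading exponent. For `h ∈ I` with leading exponent `γ` this
gives `‖h‖ = ‖(ρ - h)_γ‖ ≤ ‖ρ - h‖`, hence `‖ρ‖ ≤ max ‖ρ - h‖ ‖h‖ = ‖ρ - h‖`: the residue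
seminorm of `f` is attained at `ρ`, and the Gauss norm of `ρ` is the norm of one of its
coefficients.
-/

open Topology IsUltrametricDist
open MvPowerSeries (coeff monomial C coeff_monomial coeff_monomial_mul coeff_C_mul
  monomial_zero_eq_C)

theorem Set.Finite.exists_mem_Ico_upperBounds {α : Type*} [LinearOrder α] {s : Set α}
    (hs : s.Finite) {a b : α} (hab : a < b) (hsb : ∀ x ∈ s, x < b) :
    ∃ θ ∈ Set.Ico a b, θ ∈ upperBounds s := by
  obtain ⟨θ, hθ, hmax⟩ := Set.exists_max_image _ id (hs.insert a) (Set.insert_nonempty a s)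
  refine ⟨θ, ⟨hmax a (Set.mem_insert a s), ?_⟩, fun x hx => hmax x (Set.mem_insert_of_mem a hx)⟩
  rcases hθ with rfl | hθ
  exacts [hab, hsb θ hθ]

theorem exists_seq_of_forall_exists {α : Type*} {P : ℕ → α → Prop} {R : ℕ → α → α → Prop}
    {a : α} (h₀ : P 0 a) (h : ∀ m x, P m x → ∃ y, P (m + 1) y ∧ R m x y) :
    ∃ u : ℕ → α, ∀ m, P m (u m) ∧ R m (u m) (u (m + 1)) := by
  choose next hnext hR using h
  let v : ∀ m, {x // P m x} := fun m =>
    Nat.rec ⟨a, h₀⟩ (fun m x => ⟨next m x.1 x.2, hnext m x.1 x.2⟩) m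
  exact ⟨fun m => (v m).1, fun m => ⟨(v m).2, hR m _ (v m).2⟩⟩

theorem IsUltrametricDist.norm_sub_le_max {S : Type*} [SeminormedAddGroup S]
    [IsUltrametricDist S] (x y : S) : ‖x - y‖ ≤ max ‖x‖ ‖y‖ := by
  simpa [sub_eq_add_neg] using norm_add_le_max x (-y)

theorem tendsto_mul_pow_div_one_sub {C θ : ℝ} (hθ : 0 ≤ θ) (hθ1 : θ < 1) :
    Tendsto (fun m : ℕ => C * θ ^ m / (1 - θ)) atTop (𝓝 0) := by
  simpa using ((tendsto_pow_atTop_nhds_zero_of_lt_one hθ hθ1).const_mul C).div_const (1 - θ)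

namespace TateAlgebra

variable {k : Type*} [NontriviallyNormedField k] {n : ℕ} {f g : MvPowerSeries (Fin n) k}

theorem mem_tateAlgebra_iff :
    f ∈ tateAlgebra k n ↔ Tendsto (fun d => coeff d f) cofinite (𝓝 0) :=
  tendsto_zero_iff_norm_tendsto_zero.symm

theorem sub_mem_tateAlgebra (hf : f ∈ tateAlgebra k n) (hg : g ∈ tateAlgebra k n) :
    f - g ∈ tateAlgebra k n := by
  rw [mem_tateAlgebra_iff] at *
  simpa using hf.sub hg

theorem monomial_mem_tateAlgebra (β : Fin n →₀ ℕ) (c : k) : monomial β c ∈ tateAlgebra k n := by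
  classical
  rw [mem_tateAlgebra_iff]
  refine tendsto_const_nhds.congr' ?_
  filter_upwards [(Set.finite_singleton β).compl_mem_cofinite] with d hd
  rw [coeff_monomial, if_neg (Set.mem_compl_singleton_iff.1 hd)]

theorem finite_setOf_le_norm_coeff (hf : f ∈ tateAlgebra k n) {ε : ℝ} (hε : 0 < ε) :
    {d | ε ≤ ‖coeff d f‖}.Finite := by
  simpa only [not_lt] using eventually_cofinite.1 (hf.eventually (gt_mem_nhds hε))

theorem mem_tateAlgebra_of_forall_approx
    (h : ∀ ε > 0, ∃ g ∈ tateAlgebra k n, ∀ d, ‖coeff d f - coeff d g‖ ≤ ε) :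
    f ∈ tateAlgebra k n := by
  refine Metric.tendsto_nhds.2 fun ε hε => ?_
  obtain ⟨g, hg, hfg⟩ := h (ε / 2) (half_pos hε)
  filter_upwards [hg.eventually (gt_mem_nhds (half_pos hε))] with d hd
  rw [Real.dist_0_eq_abs, abs_norm]
  linarith [norm_le_norm_sub_add (coeff d f) (coeff d g), hfg d]

theorem norm_coeff_le_gaussNorm (hf : f ∈ tateAlgebra k n) (d : Fin n →₀ ℕ) :
    ‖coeff d f‖ ≤ gaussNorm k n f :=
  le_csSup hf.bddAbove_range_of_cofinite ⟨d, rfl⟩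

theorem gaussNorm_le {b : ℝ} (h : ∀ d, ‖coeff d f‖ ≤ b) : gaussNorm k n f ≤ b :=
  csSup_le (Set.range_nonempty _) (Set.forall_mem_range.2 h)

theorem gaussNorm_nonneg (hf : f ∈ tateAlgebra k n) : 0 ≤ gaussNorm k n f :=
  (norm_nonneg _).trans (norm_coeff_le_gaussNorm hf 0)

theorem gaussNorm_pos (hf : f ∈ tateAlgebra k n) (h0 : f ≠ 0) : 0 < gaussNorm k n f := by
  obtain ⟨d, hd⟩ := (MvPowerSeries.ne_zero_iff_exists_coeff_ne_zero f).1 h0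
  exact (norm_pos_iff.2 hd).trans_le (norm_coeff_le_gaussNorm hf d)

theorem exists_norm_coeff_eq_gaussNorm (hf : f ∈ tateAlgebra k n) :
    ∃ d, ‖coeff d f‖ = gaussNorm k n f := by
  by_cases hzero : ∀ d, coeff d f = 0
  · refine ⟨0, le_antisymm (norm_coeff_le_gaussNorm hf 0) (gaussNorm_le fun d => ?_)⟩
    simp [hzero]
  obtain ⟨d₀, hd₀⟩ := not_forall.1 hzero
  obtain ⟨d, hd, hmax⟩ := Set.exists_max_image _ (fun d => ‖coeff d f‖)
    (finite_setOf_le_norm_coeff hf (norm_pos_iff.2 hd₀)) ⟨d₀, le_refl ‖coeff d₀ f‖⟩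
  refine ⟨d, le_antisymm (norm_coeff_le_gaussNorm hf d) (gaussNorm_le fun e => ?_)⟩
  rcases le_or_gt ‖coeff d₀ f‖ ‖coeff e f‖ with he | he
  exacts [hmax e he, he.le.trans hd]

theorem gaussNorm_add_le_max [IsUltrametricDist k] (hf : f ∈ tateAlgebra k n)
    (hg : g ∈ tateAlgebra k n) :
    gaussNorm k n (f + g) ≤ max (gaussNorm k n f) (gaussNorm k n g) :=
  gaussNorm_le fun d => by
    rw [map_add]
    exact (norm_add_le_max _ _).trans
      (max_le_max (norm_coeff_le_gaussNorm hf d) (norm_coeff_le_gaussNorm hg d))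

def IsLeadingExponent (f : MvPowerSeries (Fin n) k) (γ : Fin n →₀ ℕ) : Prop :=
  ‖coeff γ f‖ = gaussNorm k n f ∧
    ∀ δ : Fin n →₀ ℕ, toLex γ < toLex δ → ‖coeff δ f‖ < gaussNorm k n f

theorem exists_isLeadingExponent (hf : f ∈ tateAlgebra k n) (h0 : f ≠ 0) :
    ∃ γ, IsLeadingExponent f γ := by
  obtain ⟨d₀, hd₀⟩ := exists_norm_coeff_eq_gaussNorm hf
  have hS : {d | ‖coeff d f‖ = gaussNorm k n f}.Finite :=
    (finite_setOf_le_norm_coeff hf (gaussNorm_pos hf h0)).subset fun d hd => hd.ge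
  obtain ⟨γ, hγ, hmax⟩ := Set.exists_max_image _ toLex hS ⟨d₀, hd₀⟩
  exact ⟨γ, hγ, fun δ hδ => (norm_coeff_le_gaussNorm hf δ).lt_of_ne fun h =>
    (hmax δ h).not_gt hδ⟩

structure IsReducer (θ : ℝ) (α : Fin n →₀ ℕ) (h : MvPowerSeries (Fin n) k) : Prop where
  coeff_self : coeff α h = 1
  norm_coeff_le_one : ∀ d, ‖coeff d h‖ ≤ 1
  norm_coeff_le_of_lt : ∀ d, toLex α < toLex d → ‖coeff d h‖ ≤ θ

theorem IsReducer.mono {θ θ' : ℝ} {α : Fin n →₀ ℕ} (hf : IsReducer θ α f) (hθ : θ ≤ θ') :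
    IsReducer θ' α f :=
  ⟨hf.coeff_self, hf.norm_coeff_le_one, fun d hd => (hf.norm_coeff_le_of_lt d hd).trans hθ⟩

theorem IsLeadingExponent.exists_isReducer {α : Fin n →₀ ℕ} (hα : IsLeadingExponent f α)
    (hf : f ∈ tateAlgebra k n) (h0 : f ≠ 0) :
    ∃ θ < 1, IsReducer θ α (C (coeff α f)⁻¹ * f) := by
  set r := gaussNorm k n f
  have hr : 0 < r := gaussNorm_pos hf h0
  have hc : coeff α f ≠ 0 := norm_ne_zero_iff.1 (hα.1.trans_ne hr.ne')
  have hnorm : ∀ d, ‖coeff d (C (coeff α f)⁻¹ * f)‖ = ‖coeff d f‖ / r := fun d => by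
    rw [coeff_C_mul, norm_mul, norm_inv, hα.1, inv_mul_eq_div]
  -- only finitely many coefficients reach `r / 2`, so the lex-larger ones stay below `θ r`
  -- for some `θ < 1`
  obtain ⟨θ, ⟨hθ, hθ1⟩, hθs⟩ :=
    (((finite_setOf_le_norm_coeff hf (half_pos hr)).inter_of_left
      {d | toLex α < toLex d}).image fun d => ‖coeff d f‖ / r).exists_mem_Ico_upperBounds
      (by norm_num : (1 / 2 : ℝ) < 1) (by
        rintro _ ⟨d, ⟨-, hd⟩, rfl⟩
        exact (div_lt_one hr).2 (hα.2 d hd))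
  refine ⟨θ, hθ1, ⟨by rw [coeff_C_mul, inv_mul_cancel₀ hc], fun d => ?_, fun d hd => ?_⟩⟩
  · rw [hnorm]
    exact div_le_one_of_le₀ (norm_coeff_le_gaussNorm hf d) hr.le
  · rw [hnorm]
    by_cases hd' : r / 2 ≤ ‖coeff d f‖
    · exact hθs ⟨d, ⟨hd', hd⟩, rfl⟩
    · refine le_trans ?_ hθ
      rw [div_le_iff₀ hr]
      linarith

structure IsTateIdeal (I : Set (MvPowerSeries (Fin n) k)) : Prop where
  subset : I ⊆ tateAlgebra k n
  zero_mem : (0 : MvPowerSeries (Fin n) k) ∈ I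
  add_mem : ∀ g ∈ I, ∀ g' ∈ I, g + g' ∈ I
  mul_mem : ∀ f ∈ tateAlgebra k n, ∀ g ∈ I, f * g ∈ I

def leadingExponents (I : Set (MvPowerSeries (Fin n) k)) : Set (Fin n →₀ ℕ) :=
  {γ | ∃ h ∈ I, h ≠ 0 ∧ IsLeadingExponent h γ}

def HasReducers (I : Set (MvPowerSeries (Fin n) k)) (G : Set (Fin n →₀ ℕ)) (θ : ℝ) : Prop :=
  ∀ γ ∈ G, ∃ α ≤ γ, ∃ h ∈ I, IsReducer θ α h

namespace IsTateIdeal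

variable {I : Set (MvPowerSeries (Fin n) k)}

theorem monomial_mul_mem (hI : IsTateIdeal I) (β : Fin n →₀ ℕ) (c : k) (hg : g ∈ I) :
    monomial β c * g ∈ I :=
  hI.mul_mem _ (monomial_mem_tateAlgebra β c) g hg

theorem C_mul_mem (hI : IsTateIdeal I) (c : k) (hg : g ∈ I) : C c * g ∈ I := by
  simpa only [monomial_zero_eq_C] using hI.monomial_mul_mem 0 c hg

theorem sub_mem (hI : IsTateIdeal I) (hf : f ∈ I) (hg : g ∈ I) : f - g ∈ I := by
  rw [sub_eq_add_neg, ← neg_one_mul, ← map_one C, ← map_neg]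
  exact hI.add_mem f hf _ (hI.C_mul_mem (-1) hg)

theorem exists_hasReducers (hI : IsTateIdeal I) :
    ∃ θ ∈ Set.Ico (1 / 2 : ℝ) 1, HasReducers I (leadingExponents I) θ := by
  -- Dickson's lemma: the minimal leading exponents form a finite antichain
  set A := {α | Minimal (· ∈ leadingExponents I) α}
  have hA : A.Finite := WellQuasiOrderedLE.finite_of_isAntichain (setOfPred_minimal_antichain _)
  have hred : ∀ α ∈ A, ∃ θ < 1, ∃ h ∈ I, IsReducer θ α h := by
    rintro α ⟨⟨h, hhI, h0, hα⟩, -⟩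
    obtain ⟨θ, hθ, hred⟩ := hα.exists_isReducer (hI.subset hhI) h0
    exact ⟨θ, hθ, _, hI.C_mul_mem _ hhI, hred⟩
  choose! Θ hΘ H hHI hH using hred
  obtain ⟨θ, hθ, hθub⟩ := (hA.image Θ).exists_mem_Ico_upperBounds
    (by norm_num : (1 / 2 : ℝ) < 1) (Set.forall_mem_image.2 hΘ)
  refine ⟨θ, hθ, fun γ hγ => ?_⟩
  obtain ⟨α, hαγ, hαA⟩ := (Set.isPWO_of_wellQuasiOrderedLE _).exists_le_minimal hγ
  exact ⟨α, hαγ, H α, hHI α hαA, (hH α hαA).mono (hθub ⟨α, hαA, rfl⟩)⟩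

end IsTateIdeal

theorem exists_limit_of_coeff_le_geometric [CompleteSpace k]
    {u : ℕ → MvPowerSeries (Fin n) k} (hu : ∀ m, u m ∈ tateAlgebra k n) {C θ : ℝ} (hθ : 0 ≤ θ)
    (hθ1 : θ < 1) (h : ∀ m d, ‖coeff d (u m) - coeff d (u (m + 1))‖ ≤ C * θ ^ m) :
    ∃ ρ ∈ tateAlgebra k n, ∀ m d, ‖coeff d (u m) - coeff d ρ‖ ≤ C * θ ^ m / (1 - θ) := by
  have hdist : ∀ d m, dist (coeff d (u m)) (coeff d (u (m + 1))) ≤ C * θ ^ m := fun d m =>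
    (dist_eq_norm _ _).trans_le (h m d)
  choose ρ hρ using fun d =>
    cauchySeq_tendsto_of_complete (cauchySeq_of_le_geometric θ C hθ1 (hdist d))
  have hbound : ∀ m d, ‖coeff d (u m) - coeff (R := k) d ρ‖ ≤ C * θ ^ m / (1 - θ) :=
    fun m d => (dist_eq_norm _ _).symm.trans_le
      (dist_le_of_le_geometric_of_tendsto θ C hθ1 (hdist d) (hρ d) m)
  refine ⟨ρ, mem_tateAlgebra_of_forall_approx fun ε hε => ?_, hbound⟩
  obtain ⟨m, hm⟩ := ((tendsto_mul_pow_div_one_sub hθ hθ1).eventually (ge_mem_nhds hε)).exists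
  exact ⟨u m, hu m, fun d => (norm_sub_rev _ _).trans_le ((hbound m d).trans hm)⟩

namespace IsTateIdeal

variable {I : Set (MvPowerSeries (Fin n) k)} {G : Set (Fin n →₀ ℕ)} {θ : ℝ}

theorem exists_mem_coeff_eq (hI : IsTateIdeal I) (hθ : 0 ≤ θ) (hred : HasReducers I G θ)
    {γ : Fin n →₀ ℕ} (hγ : γ ∈ G) (c : k) :
    ∃ x ∈ I, coeff γ x = c ∧ (∀ d, ‖coeff d x‖ ≤ ‖c‖) ∧
      ∀ d, toLex γ < toLex d → ‖coeff d x‖ ≤ θ * ‖c‖ := by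
  obtain ⟨α, hαγ, h, hhI, hh⟩ := hred γ hγ
  obtain ⟨β, rfl⟩ := exists_add_of_le hαγ
  refine ⟨monomial β c * h, hI.monomial_mul_mem β c hhI, ?_, fun d => ?_, fun d hd => ?_⟩
  · rw [coeff_monomial_mul, if_pos le_add_self, add_tsub_cancel_right, hh.coeff_self, mul_one]
  · rw [coeff_monomial_mul]
    split_ifs
    · rw [norm_mul]
      exact mul_le_of_le_one_right (norm_nonneg c) (hh.norm_coeff_le_one _)
    · simp
  · rw [coeff_monomial_mul]
    split_ifs with hβd
    · obtain ⟨e, rfl⟩ := exists_add_of_le hβd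
      rw [add_tsub_cancel_left, norm_mul, mul_comm θ]
      refine mul_le_mul_of_nonneg_left (hh.norm_coeff_le_of_lt e ?_) (norm_nonneg c)
      rw [add_comm α β, toLex_add, toLex_add] at hd
      exact lt_of_add_lt_add_left hd
    · rw [norm_zero]
      positivity

variable [IsUltrametricDist k]

theorem exists_mem_eliminate_top (hI : IsTateIdeal I) (hθ : 0 ≤ θ) (hred : HasReducers I G θ)
    {s : ℝ} (hs : 0 ≤ s) {σ : MvPowerSeries (Fin n) k} (hσ : ∀ δ ∈ G, ‖coeff δ σ‖ ≤ s)
    {γ : Fin n →₀ ℕ} (hγ : γ ∈ G) (htop : ∀ δ ∈ G, θ * s < ‖coeff δ σ‖ → toLex δ ≤ toLex γ) :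
    ∃ x ∈ I, (∀ d, ‖coeff d x‖ ≤ s) ∧ (∀ δ ∈ G, ‖coeff δ (σ - x)‖ ≤ s) ∧
      ∀ δ ∈ G, θ * s < ‖coeff δ (σ - x)‖ → toLex δ < toLex γ := by
  obtain ⟨x, hxI, hxγ, hx, hx_gt⟩ := hI.exists_mem_coeff_eq hθ hred hγ (coeff γ σ)
  have hxs : ∀ d, ‖coeff d x‖ ≤ s := fun d => (hx d).trans (hσ γ hγ)
  refine ⟨x, hxI, hxs, fun δ hδ => ?_, fun δ hδ hδs => ?_⟩
  · rw [map_sub]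
    exact (norm_sub_le_max _ _).trans (max_le (hσ δ hδ) (hxs δ))
  rcases lt_trichotomy (toLex δ) (toLex γ) with hlt | heq | hgt
  · exact hlt
  · rw [toLex_inj.1 heq, map_sub, hxγ, sub_self, norm_zero] at hδs
    exact absurd hδs (not_lt.2 (mul_nonneg hθ hs))
  · have hσδ : ‖coeff δ σ‖ ≤ θ * s := not_lt.1 fun h => (htop δ hδ h).not_gt hgt
    have hxδ : ‖coeff δ x‖ ≤ θ * s :=
      (hx_gt δ hgt).trans (mul_le_mul_of_nonneg_left (hσ γ hγ) hθ)
    rw [map_sub] at hδs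
    exact absurd ((norm_sub_le_max _ _).trans (max_le hσδ hxδ)) (not_le.2 hδs)

theorem exists_mem_reduce (hI : IsTateIdeal I) (hθ : 0 < θ) (hred : HasReducers I G θ)
    {s : ℝ} (hs : 0 < s) {σ : MvPowerSeries (Fin n) k} (hσT : σ ∈ tateAlgebra k n)
    (hσ : ∀ γ ∈ G, ‖coeff γ σ‖ ≤ s) :
    ∃ x ∈ I, (∀ d, ‖coeff d x‖ ≤ s) ∧ ∀ γ ∈ G, ‖coeff γ (σ - x)‖ ≤ θ * s := by
  suffices key : ∀ l : WithTop (Lex (Fin n →₀ ℕ)), ∀ σ ∈ tateAlgebra k n,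
      (∀ γ ∈ G, ‖coeff γ σ‖ ≤ s) →
      (∀ γ ∈ G, θ * s < ‖coeff γ σ‖ → ((toLex γ : Lex (Fin n →₀ ℕ)) : WithTop _) < l) →
      ∃ x ∈ I, (∀ d, ‖coeff d x‖ ≤ s) ∧ ∀ γ ∈ G, ‖coeff γ (σ - x)‖ ≤ θ * s from
    key ⊤ σ hσT hσ fun _ _ _ => WithTop.coe_lt_top _
  intro l
  induction l using WellFoundedLT.induction with
  | _ l ih =>
  intro σ hσT hσ hl
  set D := {γ | γ ∈ G ∧ θ * s < ‖coeff γ σ‖}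
  rcases D.eq_empty_or_nonempty with hD | hD
  · refine ⟨0, hI.zero_mem, fun d => by simpa using hs.le, fun γ hγ => ?_⟩
    rw [sub_zero]
    exact not_lt.1 fun h => Set.eq_empty_iff_forall_notMem.1 hD γ ⟨hγ, h⟩
  have hDfin : D.Finite :=
    (finite_setOf_le_norm_coeff hσT (mul_pos hθ hs)).subset fun _ h => h.2.le
  obtain ⟨γ, ⟨hγG, hγσ⟩, hγmax⟩ := Set.exists_max_image D toLex hDfin hD
  obtain ⟨x, hxI, hxs, hσx, hσx_lt⟩ :=
    hI.exists_mem_eliminate_top hθ.le hred hs.le hσ hγG fun δ hδ h => hγmax δ ⟨hδ, h⟩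
  obtain ⟨y, hyI, hys, hy⟩ := ih _ (hl γ hγG hγσ) (σ - x)
    (sub_mem_tateAlgebra hσT (hI.subset hxI)) hσx fun δ hδ h =>
      WithTop.coe_lt_coe.2 (hσx_lt δ hδ h)
  refine ⟨x + y, hI.add_mem x hxI y hyI, fun d => ?_, fun δ hδ => ?_⟩
  · rw [map_add]
    exact (norm_add_le_max _ _).trans (max_le (hxs d) (hys d))
  · rw [← sub_sub]
    exact hy δ hδ

theorem exists_seq_reduce (hI : IsTateIdeal I) (hθ : 0 < θ) (hred : HasReducers I G θ)
    (hf : f ∈ tateAlgebra k n) :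
    ∃ s > 0, ∃ u : ℕ → MvPowerSeries (Fin n) k, ∀ m,
      (u m ∈ tateAlgebra k n ∧ f - u m ∈ I ∧ ∀ γ ∈ G, ‖coeff γ (u m)‖ ≤ s * θ ^ m) ∧
        ∀ d, ‖coeff d (u m) - coeff d (u (m + 1))‖ ≤ s * θ ^ m := by
  set s := gaussNorm k n f + 1
  have hs : 0 < s := by linarith [gaussNorm_nonneg hf]
  refine ⟨s, hs, exists_seq_of_forall_exists
    (P := fun m σ => σ ∈ tateAlgebra k n ∧ f - σ ∈ I ∧ ∀ γ ∈ G, ‖coeff γ σ‖ ≤ s * θ ^ m)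
    (R := fun m σ σ' => ∀ d, ‖coeff d σ - coeff d σ'‖ ≤ s * θ ^ m)
    ⟨hf, by simpa using hI.zero_mem, fun γ _ => ?_⟩ fun m σ ⟨hσT, hσI, hσG⟩ => ?_⟩
  · simpa using (norm_coeff_le_gaussNorm hf γ).trans (by linarith)
  obtain ⟨x, hxI, hxs, hx⟩ := hI.exists_mem_reduce hθ hred (by positivity) hσT hσG
  refine ⟨σ - x, ⟨sub_mem_tateAlgebra hσT (hI.subset hxI), ?_, fun γ hγ => ?_⟩, fun d => ?_⟩
  · rw [sub_sub_eq_add_sub, add_sub_right_comm]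
    exact hI.add_mem _ hσI x hxI
  · exact (hx γ hγ).trans_eq (by ring)
  · simpa using hxs d

theorem exists_sub_mem_coeff_eq_zero [CompleteSpace k] (hI : IsTateIdeal I) (hθ : 0 < θ)
    (hθ1 : θ < 1) (hred : HasReducers I G θ)
    (hIclosed : ∀ f ∈ tateAlgebra k n,
      (∀ ε : ℝ, 0 < ε → ∃ g ∈ I, gaussNorm k n (f - g) < ε) → f ∈ I)
    (hf : f ∈ tateAlgebra k n) :
    ∃ ρ ∈ tateAlgebra k n, f - ρ ∈ I ∧ ∀ γ ∈ G, coeff γ ρ = 0 := by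
  obtain ⟨s, hs, u, hu⟩ := hI.exists_seq_reduce hθ hred hf
  obtain ⟨ρ, hρT, hρ⟩ :=
    exists_limit_of_coeff_le_geometric (fun m => (hu m).1.1) hθ.le hθ1 fun m => (hu m).2
  have hlim := tendsto_mul_pow_div_one_sub (C := s) hθ.le hθ1
  refine ⟨ρ, hρT, hIclosed _ (sub_mem_tateAlgebra hf hρT) fun ε hε => ?_, fun γ hγ => ?_⟩
  · obtain ⟨m, hm⟩ := (hlim.eventually (gt_mem_nhds hε)).exists
    refine ⟨f - u m, (hu m).1.2.1, (gaussNorm_le fun d => ?_).trans_lt hm⟩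
    rw [sub_sub_sub_cancel_left, map_sub]
    exact hρ m d
  · refine norm_le_zero_iff.1 (ge_of_tendsto' hlim fun m => ?_)
    have hum : ‖coeff γ (u m)‖ ≤ s * θ ^ m / (1 - θ) :=
      ((hu m).1.2.2 γ hγ).trans (le_div_self (by positivity) (by linarith) (by linarith))
    calc ‖coeff γ ρ‖ = ‖coeff γ (u m) - (coeff γ (u m) - coeff γ ρ)‖ := by rw [sub_sub_cancel]
      _ ≤ s * θ ^ m / (1 - θ) := (norm_sub_le_max _ _).trans (max_le hum (hρ m γ))

theorem gaussNorm_le_gaussNorm_sub (hI : IsTateIdeal I) (hf : f ∈ tateAlgebra k n)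
    (hfI : ∀ γ ∈ leadingExponents I, coeff γ f = 0) (hg : g ∈ I) :
    gaussNorm k n f ≤ gaussNorm k n (f - g) := by
  rcases eq_or_ne g 0 with rfl | h0
  · rw [sub_zero]
  have hgT := hI.subset hg
  have hfg := sub_mem_tateAlgebra hf hgT
  obtain ⟨γ, hγ⟩ := exists_isLeadingExponent hgT h0
  have hle : gaussNorm k n g ≤ gaussNorm k n (f - g) :=
    calc gaussNorm k n g = ‖coeff γ (f - g)‖ := by
          rw [map_sub, hfI γ ⟨g, hg, h0, hγ⟩, zero_sub, norm_neg, hγ.1]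
      _ ≤ gaussNorm k n (f - g) := norm_coeff_le_gaussNorm hfg γ
  calc gaussNorm k n f = gaussNorm k n ((f - g) + g) := by rw [sub_add_cancel]
    _ ≤ max (gaussNorm k n (f - g)) (gaussNorm k n g) := gaussNorm_add_le_max hfg hgT
    _ = gaussNorm k n (f - g) := max_eq_left hle

end IsTateIdeal

end TateAlgebra

open TateAlgebra in
theorem stmt2_general (k : Type*) [NontriviallyNormedField k] [IsUltrametricDist k] [CompleteSpace k]
    (n : ℕ) (I : Set (MvPowerSeries (Fin n) k))
    (hIsub : I ⊆ tateAlgebra k n)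
    (hI0 : (0 : MvPowerSeries (Fin n) k) ∈ I)
    (hIadd : ∀ g ∈ I, ∀ g' ∈ I, g + g' ∈ I)
    (hImul : ∀ f ∈ tateAlgebra k n, ∀ g ∈ I, f * g ∈ I)
    (hIclosed : ∀ f ∈ tateAlgebra k n,
      (∀ ε : ℝ, 0 < ε → ∃ g ∈ I, gaussNorm k n (f - g) < ε) → f ∈ I)
    (f : MvPowerSeries (Fin n) k) (hf : f ∈ tateAlgebra k n) :
    ∃ g ∈ I, gaussNorm k n (f - g) = sInf {t : ℝ | ∃ g' ∈ I, t = gaussNorm k n (f - g')} ∧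
      ∃ lam : k, gaussNorm k n (f - g) = ‖lam‖ := by
  have hI : IsTateIdeal I := ⟨hIsub, hI0, hIadd, hImul⟩
  obtain ⟨θ, ⟨hθ, hθ1⟩, hred⟩ := hI.exists_hasReducers
  obtain ⟨ρ, hρ, hfρ, hρG⟩ :=
    hI.exists_sub_mem_coeff_eq_zero (by linarith) hθ1 hred hIclosed hf
  have hmin : IsLeast {t : ℝ | ∃ g' ∈ I, t = gaussNorm k n (f - g')} (gaussNorm k n ρ) := by
    refine ⟨⟨f - ρ, hfρ, by rw [sub_sub_cancel]⟩, ?_⟩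
    rintro _ ⟨g', hg', rfl⟩
    have hfg' : f - g' = ρ - (g' - (f - ρ)) := by abel
    rw [hfg']
    exact hI.gaussNorm_le_gaussNorm_sub hρ hρG (hI.sub_mem hg' hfρ)
  obtain ⟨d, hd⟩ := exists_norm_coeff_eq_gaussNorm hρ
  refine ⟨f - ρ, hfρ, ?_, coeff d ρ, ?_⟩ <;> rw [sub_sub_cancel]
  exacts [hmin.csInf_eq.symm, hd.symm]

/-- over a complete nonarchimedean field with dense valuation, for a quotient
`A = k{t₁,…,tₙ}/I` of the Tate algebra by a closed ideal `I`, equipped with the residue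
seminorm, the infimum defining the residue seminorm of any element is attained; in
particular the residue seminorm takes values in the value group `|k|`. -/
theorem stmt2 (k : Type*) [NontriviallyNormedField k] [IsUltrametricDist k] [CompleteSpace k]
    (hdense : ∀ r s : ℝ, 0 < r → r < s → ∃ lam : k, r < ‖lam‖ ∧ ‖lam‖ < s)
    (n : ℕ) (I : Set (MvPowerSeries (Fin n) k))
    (hIsub : I ⊆ tateAlgebra k n)
    (hI0 : (0 : MvPowerSeries (Fin n) k) ∈ I)
    (hIadd : ∀ g ∈ I, ∀ g' ∈ I, g + g' ∈ I)
    (hImul : ∀ f ∈ tateAlgebra k n, ∀ g ∈ I, f * g ∈ I)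
    (hIclosed : ∀ f ∈ tateAlgebra k n,
      (∀ ε : ℝ, 0 < ε → ∃ g ∈ I, gaussNorm k n (f - g) < ε) → f ∈ I)
    (f : MvPowerSeries (Fin n) k) (hf : f ∈ tateAlgebra k n) :
    ∃ g ∈ I, gaussNorm k n (f - g) = sInf {t : ℝ | ∃ g' ∈ I, t = gaussNorm k n (f - g')} ∧
      ∃ lam : k, gaussNorm k n (f - g) = ‖lam‖ :=
  stmt2_general k n I hIsub hI0 hIadd hImul hIclosed f hf
end

section
/- Let k be a complete nonarchimedean field, V and W affine varieties over k, and f : V → W a finite morphism. Then the preimage under f of a bounded subset of W(k) is a bounded subset of V(k). -/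
/-! Each `b : B` is a root of a monic polynomial over `A`. At a point `x` of the preimage,
`x b` is a root of the image polynomial, whose coefficients are the values of fixed elements
of `A` at a point of `T`, hence bounded uniformly in `x`; Cauchy's bound on roots then bounds
`‖x b‖`. -/

open Polynomial

theorem Polynomial.Monic.norm_lt_of_isRoot {K : Type*} [NormedDivisionRing K] {p : K[X]}
    (hp : p.Monic) {z : K} (hz : p.IsRoot z) {M : ℝ}
    (hM : ∀ i < p.natDegree, ‖p.coeff i‖ ≤ M) : ‖z‖ < M + 1 := by
  have hdeg : 0 < p.natDegree :=
    Nat.pos_of_ne_zero fun h => by simp [hp.natDegree_eq_zero.1 h] at hz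
  have hM₀ : 0 ≤ M := (norm_nonneg _).trans (hM 0 hdeg)
  have hbound : cauchyBound p ≤ M.toNNReal + 1 := by
    rw [cauchyBound, hp.leadingCoeff, nnnorm_one, div_one]
    gcongr
    refine Finset.sup_le fun i hi => ?_
    rw [← norm_toNNReal]
    exact Real.toNNReal_mono (hM i (Finset.mem_range.1 hi))
  have := (hz.norm_lt_cauchyBound hp.ne_zero).trans_le hbound
  rwa [← NNReal.coe_lt_coe, NNReal.coe_add, Real.coe_toNNReal _ hM₀, coe_nnnorm,
    NNReal.coe_one] at this

theorem IsIntegral.exists_forall_norm_apply_le {A B K ι : Type*} [CommRing A] [Ring B]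
    [Algebra A B] [NormedDivisionRing K] {b : B} (hb : IsIntegral A b) (φ : ι → B →+* K)
    (hφ : ∀ a : A, ∃ C : ℝ, ∀ i, ‖φ i (algebraMap A B a)‖ ≤ C) :
    ∃ C : ℝ, ∀ i, ‖φ i b‖ ≤ C := by
  obtain ⟨p, hpm, hpb⟩ := hb
  choose C hC using hφ
  refine ⟨∑ j ∈ Finset.range p.natDegree, |C (p.coeff j)| + 1, fun i => ?_⟩
  set ψ := (φ i).comp (algebraMap A B)
  have hroot : (p.map ψ).IsRoot (φ i b) := by
    rw [IsRoot.def, eval_map, ← hom_eval₂, hpb, map_zero]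
  refine ((hpm.map ψ).norm_lt_of_isRoot hroot fun j hj => ?_).le
  rw [hpm.natDegree_map] at hj
  calc ‖(p.map ψ).coeff j‖ = ‖φ i (algebraMap A B (p.coeff j))‖ := by rw [coeff_map]; rfl
    _ ≤ |C (p.coeff j)| := (hC _ i).trans (le_abs_self _)
    _ ≤ ∑ j ∈ Finset.range p.natDegree, |C (p.coeff j)| :=
      Finset.single_le_sum (f := fun j => |C (p.coeff j)|) (fun _ _ => abs_nonneg _)
        (Finset.mem_range.2 hj)

theorem stmt6_general (k : Type*) [NontriviallyNormedField k]
    (A B : Type*) [CommRing A] [CommRing B] [Algebra k A] [Algebra k B]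
    [Algebra A B] [IsScalarTower k A B]
    [Module.Finite A B]
    (T : Set (A →ₐ[k] k)) (hT : ∀ a : A, ∃ C : ℝ, ∀ y ∈ T, ‖y a‖ ≤ C) :
    ∀ b : B, ∃ C : ℝ, ∀ x : B →ₐ[k] k,
      x.comp (IsScalarTower.toAlgHom k A B) ∈ T → ‖x b‖ ≤ C := by
  intro b
  let φ (x : {x : B →ₐ[k] k // x.comp (IsScalarTower.toAlgHom k A B) ∈ T}) : B →+* k := x.1
  have hφ (a : A) : ∃ C : ℝ, ∀ x, ‖φ x (algebraMap A B a)‖ ≤ C :=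
    (hT a).imp fun C hC x => hC _ x.2
  obtain ⟨C, hC⟩ :=
    (Algebra.IsIntegral.isIntegral (R := A) b).exists_forall_norm_apply_le φ hφ
  exact ⟨C, fun x hx => hC ⟨x, hx⟩⟩

/-- let `f : V → W` be a finite morphism of affine varieties over a complete
nonarchimedean field `k`. Algebraically: `W = Spec A`, `V = Spec B` with `A, B` finite type
`k`-algebras and `B` a finite `A`-module, `k`-points being `k`-algebra homomorphisms to
`k`, and a set of points is bounded iff every regular function is bounded on it. Then the
preimage under `f` of a bounded subset of `W(k)` is a bounded subset of `V(k)`. -/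
theorem stmt6 (k : Type*) [NontriviallyNormedField k] [IsUltrametricDist k] [CompleteSpace k]
    (A B : Type*) [CommRing A] [CommRing B] [Algebra k A] [Algebra k B]
    [Algebra A B] [IsScalarTower k A B]
    [Algebra.FiniteType k A] [Algebra.FiniteType k B]
    [Module.Finite A B]
    (T : Set (A →ₐ[k] k)) (hT : ∀ a : A, ∃ C : ℝ, ∀ y ∈ T, ‖y a‖ ≤ C) :
    ∀ b : B, ∃ C : ℝ, ∀ x : B →ₐ[k] k,
      x.comp (IsScalarTower.toAlgHom k A B) ∈ T → ‖x b‖ ≤ C :=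
  stmt6_general k A B T hT
end

section
/- Let k be a complete nonarchimedean field with ring of integers k°. Then GLₙ(k°) is a maximal bounded subgroup of GLₙ(k): if H is a bounded subgroup of GLₙ(k) containing GLₙ(k°), then H = GLₙ(k°). -/
/-!
If `h ∈ H` had an entry of norm `> 1`, then some column `v = h eⱼ` has `‖v‖ > 1`. Since
`GLₙ(k°)` acts transitively on lines, `v = c • u eⱼ` with `u ∈ GLₙ(k°) ⊆ H` and `‖c‖ = ‖v‖`.
Then `g = u⁻¹ h ∈ H` has `g eⱼ = c eⱼ`, so the `(j, j)` entries `cᵐ` of the powers `gᵐ ∈ H` are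
unbounded, contradicting the boundedness of `H`.
-/

open Matrix

theorem exists_norm_apply_eq_norm {ι E : Type*} [Fintype ι] [Nonempty ι] [SeminormedAddGroup E]
    (x : ι → E) : ∃ q, ‖x q‖ = ‖x‖ := by
  obtain ⟨q, -, hq⟩ := Finset.exists_mem_eq_sup Finset.univ Finset.univ_nonempty (‖x ·‖₊)
  exact ⟨q, by rw [Pi.norm_def, hq]; rfl⟩

section

variable {ι : Type*} [Fintype ι] [DecidableEq ι]

theorem norm_le_one_of_mulVec_single_eq_smul {k : Type*} [NormedField k] {M : Matrix ι ι k}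
    {j : ι} {c : k} {C : ℝ} (hC : ∀ m : ℕ, ‖(M ^ m) j j‖ ≤ C)
    (hM : M *ᵥ Pi.single j 1 = c • Pi.single j 1) : ‖c‖ ≤ 1 := by
  have hpow : ∀ m : ℕ, M ^ m *ᵥ Pi.single j 1 = c ^ m • Pi.single j 1 := by
    intro m
    induction m with
    | zero => rw [pow_zero, pow_zero, one_mulVec, one_smul]
    | succ m ih => rw [pow_succ', ← mulVec_mulVec, ih, mulVec_smul, hM, smul_smul, pow_succ]
  have hdiag : ∀ m : ℕ, (M ^ m) j j = c ^ m := fun m => by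
    simpa [mulVec_single_one] using congrFun (hpow m) j
  by_contra! hc
  obtain ⟨m, hm⟩ := pow_unbounded_of_one_lt C hc
  exact (hC m).not_gt (by rwa [hdiag, norm_pow])

section Ultrametric

variable {k : Type*} [NormedField k] [IsUltrametricDist k]

theorem norm_det_le_one {M : Matrix ι ι k} (hM : ∀ i j, ‖M i j‖ ≤ 1) : ‖M.det‖ ≤ 1 := by
  rw [det_apply]
  refine IsUltrametricDist.norm_sum_le_of_forall_le_of_nonneg zero_le_one fun σ _ => ?_
  rw [Units.smul_def, ← Int.cast_smul_eq_zsmul k, smul_eq_mul, norm_mul, norm_prod]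
  exact mul_le_one₀ (IsUltrametricDist.norm_intCast_le_one k _) (by positivity)
    (Finset.prod_le_one (fun _ _ => norm_nonneg _) fun i _ => hM _ _)

theorem norm_inv_apply_le_one {M : Matrix ι ι k} (hM : ∀ i j, ‖M i j‖ ≤ 1)
    (hdet : ‖M.det‖ = 1) (i j : ι) : ‖M⁻¹ i j‖ ≤ 1 := by
  rw [inv_def, Matrix.smul_apply, smul_eq_mul, norm_mul, Ring.inverse_eq_inv, norm_inv, hdet,
    inv_one, one_mul, adjugate_apply]
  refine norm_det_le_one fun a b => ?_
  rw [updateRow_apply]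
  split_ifs
  · rw [Pi.single_apply]; split_ifs <;> simp
  · exact hM a b

theorem exists_integral_unit_mulVec_single_eq {w : ι → k} (hw : ∀ a, ‖w a‖ ≤ 1) {q : ι}
    (hq : ‖w q‖ = 1) (j : ι) :
    ∃ u : GL ι k, (∀ a b, ‖(u : Matrix ι ι k) a b‖ ≤ 1 ∧
      ‖((u⁻¹ : GL ι k) : Matrix ι ι k) a b‖ ≤ 1) ∧ (u : Matrix ι ι k) *ᵥ Pi.single j 1 = w := by
  set M : Matrix ι ι k := ((1 : Matrix ι ι k).updateCol q w).submatrix id (Equiv.swap j q)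
  have hent : ∀ a b, ‖M a b‖ ≤ 1 := by
    intro a b
    simp only [M, submatrix_apply, id, updateCol_apply, one_apply]
    split_ifs <;> simp [hw]
  have hdet : ‖M.det‖ = 1 := by
    rw [det_permute', ← cramer_apply, cramer_one, norm_mul]
    rcases Int.units_eq_one_or (Equiv.Perm.sign (Equiv.swap j q)) with h | h <;> simp [h, hq]
  have hunit : IsUnit M := (isUnit_iff_isUnit_det M).2 (isUnit_iff_ne_zero.2 fun h0 => by
    simp [h0] at hdet)
  refine ⟨hunit.unit, fun a b => ⟨hent a b, ?_⟩, ?_⟩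
  · rw [coe_units_inv, IsUnit.unit_spec]
    exact norm_inv_apply_le_one hent hdet a b
  · ext a
    simp [M]

/-- `GLₙ(k°)` acts transitively on the lines of `kⁿ`. -/
theorem exists_integral_unit_smul_mulVec_single_eq (v : ι → k) (j : ι) :
    ∃ (u : GL ι k) (c : k), (∀ a b, ‖(u : Matrix ι ι k) a b‖ ≤ 1 ∧
      ‖((u⁻¹ : GL ι k) : Matrix ι ι k) a b‖ ≤ 1) ∧ ‖c‖ = ‖v‖ ∧
      c • ((u : Matrix ι ι k) *ᵥ Pi.single j 1) = v := by
  have : Nonempty ι := ⟨j⟩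
  obtain ⟨q, hq⟩ := exists_norm_apply_eq_norm v
  by_cases hv : v q = 0
  · have hv0 : v = 0 := norm_eq_zero.1 (by rw [← hq, hv, norm_zero])
    refine ⟨1, 0, fun a b => ?_, by simp [hv0], by simp [hv0]⟩
    simp only [inv_one, Units.val_one, and_self, one_apply]
    split_ifs <;> simp
  · have hw : ∀ a, ‖((v q)⁻¹ • v) a‖ ≤ 1 := fun a => by
      rw [Pi.smul_apply, smul_eq_mul, norm_mul, norm_inv, hq]
      exact inv_mul_le_one_of_le₀ (norm_le_pi_norm v a) (norm_nonneg _)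
    obtain ⟨u, hu, huj⟩ := exists_integral_unit_mulVec_single_eq hw (q := q) (by simp [hv]) j
    exact ⟨u, v q, hu, hq, by rw [huj, smul_inv_smul₀ hv]⟩

end Ultrametric

end

theorem stmt11_general (k : Type*) [NontriviallyNormedField k] [IsUltrametricDist k]
    (n : ℕ) (H : Subgroup (GL (Fin n) k))
    (hbdd : ∃ C : ℝ, ∀ h ∈ H, ∀ i j,
      ‖(h : Matrix (Fin n) (Fin n) k) i j‖ ≤ C ∧
      ‖((h⁻¹ : GL (Fin n) k) : Matrix (Fin n) (Fin n) k) i j‖ ≤ C)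
    (hcont : ∀ g : GL (Fin n) k,
      (∀ i j, ‖(g : Matrix (Fin n) (Fin n) k) i j‖ ≤ 1 ∧
        ‖((g⁻¹ : GL (Fin n) k) : Matrix (Fin n) (Fin n) k) i j‖ ≤ 1) → g ∈ H) :
    ∀ h ∈ H, ∀ i j, ‖(h : Matrix (Fin n) (Fin n) k) i j‖ ≤ 1 ∧
      ‖((h⁻¹ : GL (Fin n) k) : Matrix (Fin n) (Fin n) k) i j‖ ≤ 1 := by
  obtain ⟨C, hC⟩ := hbdd
  suffices key : ∀ h ∈ H, ∀ i j, ‖(h : Matrix (Fin n) (Fin n) k) i j‖ ≤ 1 from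
    fun h hh i j => ⟨key h hh i j, key _ (H.inv_mem hh) i j⟩
  intro h hh i j
  set v := (h : Matrix (Fin n) (Fin n) k) *ᵥ Pi.single j 1
  obtain ⟨u, c, hu, hc, hv⟩ := exists_integral_unit_smul_mulVec_single_eq v j
  have hg : u⁻¹ * h ∈ H := H.mul_mem (H.inv_mem (hcont u hu)) hh
  have hgj : ((u⁻¹ * h : GL (Fin n) k) : Matrix (Fin n) (Fin n) k) *ᵥ Pi.single j 1 =
      c • Pi.single j 1 := by
    rw [Units.val_mul, ← mulVec_mulVec]
    change _ *ᵥ v = _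
    rw [← hv, mulVec_smul, mulVec_mulVec, ← Units.val_mul,
      inv_mul_cancel, Units.val_one, one_mulVec]
  have hcle : ‖c‖ ≤ 1 := norm_le_one_of_mulVec_single_eq_smul
    (fun m => by simpa using (hC _ (H.pow_mem hg m) j j).1) hgj
  calc ‖(h : Matrix (Fin n) (Fin n) k) i j‖ = ‖v i‖ := by simp [v]
    _ ≤ ‖v‖ := norm_le_pi_norm v i
    _ ≤ 1 := hc ▸ hcle

/-- `GLₙ(k°)` is a maximal bounded subgroup of `GLₙ(k)`: any bounded
subgroup `H` of `GLₙ(k)` containing all matrices `g` with `g, g⁻¹` integral consists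
exactly of such matrices. -/
theorem stmt11 (k : Type*) [NontriviallyNormedField k] [IsUltrametricDist k] [CompleteSpace k]
    (n : ℕ) (H : Subgroup (GL (Fin n) k))
    (hbdd : ∃ C : ℝ, ∀ h ∈ H, ∀ i j,
      ‖(h : Matrix (Fin n) (Fin n) k) i j‖ ≤ C ∧
      ‖((h⁻¹ : GL (Fin n) k) : Matrix (Fin n) (Fin n) k) i j‖ ≤ C)
    (hcont : ∀ g : GL (Fin n) k,
      (∀ i j, ‖(g : Matrix (Fin n) (Fin n) k) i j‖ ≤ 1 ∧
        ‖((g⁻¹ : GL (Fin n) k) : Matrix (Fin n) (Fin n) k) i j‖ ≤ 1) → g ∈ H) :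
    ∀ h ∈ H, ∀ i j, ‖(h : Matrix (Fin n) (Fin n) k) i j‖ ≤ 1 ∧
      ‖((h⁻¹ : GL (Fin n) k) : Matrix (Fin n) (Fin n) k) i j‖ ≤ 1 :=
  stmt11_general k n H hbdd hcont
end

section
/- Let G be a group acting on a set X, let L be a G-equivariant family of one-dimensional k-vector spaces over X (G acts on X and linearly on the fibers), and let ‖·‖ be a metric on L (a choice of norm on each fiber, with ‖λs‖ = |λ|‖s‖). Suppose a subgroup K ⊆ G acts transitively on X and preserves ‖·‖. If H ⊇ K is a subgroup such that ‖s‖_H(x) := sup_{h∈H} ‖h·s‖(h·x) is finite for all (x,s), then the function φ(x) := ‖s‖_H(x)/‖s‖(x) (for any nonzero s in the fiber over x) is well defined, K-invariant, hence constant on X, and consequently H preserves the metric ‖·‖ up to the constant φ; if moreover φ ≡ 1 then H is contained in the stabilizer of ‖·‖. -/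
/-- let `G` act on `X`, let `L` be a `G`-equivariant family of
one-dimensional `k`-vector spaces over `X` (with equivariant structure maps `A g x`
satisfying the cocycle conditions), and `Nm` a metric on `L`. If a subgroup `K ≤ G` acts
transitively on `X` and preserves `Nm`, and `H ⊇ K` is a subgroup for which
`‖s‖_H(x) = sup_{h∈H} ‖h·s‖(h·x)` is finite, then the ratio `‖·‖_H/‖·‖` is a
well-defined constant `C` on `X` (so `H` preserves the metric up to `C`), and if the
ratio is identically `1` then `H` is contained in the stabilizer of the metric. -/
theorem stmt16 (k : Type*) [NontriviallyNormedField k]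
    (G : Type*) [Group G] (X : Type*) [MulAction G X]
    (L : X → Type*) [∀ x, AddCommGroup (L x)] [∀ x, Module k (L x)]
    (hdim : ∀ x, Module.finrank k (L x) = 1)
    (A : ∀ (g : G) (x : X), L x ≃ₗ[k] L (g • x))
    (hA1 : ∀ (x : X) (s : L x), (one_smul G x) ▸ (A 1 x s) = s)
    (hAmul : ∀ (g g' : G) (x : X) (s : L x),
      (mul_smul g g' x) ▸ (A (g * g') x s) = A g (g' • x) (A g' x s))
    (Nm : ∀ x : X, L x → ℝ)
    (hNm0 : ∀ (x : X) (s : L x), Nm x s = 0 ↔ s = 0)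
    (hNmsmul : ∀ (x : X) (c : k) (s : L x), Nm x (c • s) = ‖c‖ * Nm x s)
    (K H : Subgroup G) (hKH : K ≤ H)
    (hKtrans : ∀ x y : X, ∃ g ∈ K, g • x = y)
    (hKinv : ∀ g ∈ K, ∀ (x : X) (s : L x), Nm (g • x) (A g x s) = Nm x s)
    (hHbdd : ∀ (x : X) (s : L x), BddAbove {t : ℝ | ∃ h ∈ H, t = Nm (h • x) (A h x s)}) :
    let NmH : ∀ x : X, L x → ℝ := fun x s => sSup {t : ℝ | ∃ h ∈ H, t = Nm (h • x) (A h x s)}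
    (∃ C : ℝ, ∀ (x : X) (s : L x), s ≠ 0 → NmH x s = C * Nm x s) ∧
      ((∀ (x : X) (s : L x), s ≠ 0 → NmH x s = Nm x s) →
        ∀ h ∈ H, ∀ (x : X) (s : L x), Nm (h • x) (A h x s) = Nm x s) := by

  intro NmH
  have castNm : ∀ {x y : X} (e : x = y) (s : L x), Nm y (e ▸ s) = Nm x s := by
    rintro x y rfl s; rfl
  have hmulNm : ∀ (g g' : G) (x : X) (s : L x),
      Nm (g • (g' • x)) (A g (g' • x) (A g' x s)) = Nm ((g * g') • x) (A (g * g') x s) := by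
    intro g g' x s
    rw [← hAmul g g' x s]
    exact castNm (mul_smul g g' x) (A (g * g') x s)
  have h1 : ∀ (x : X) (s : L x), Nm ((1 : G) • x) (A 1 x s) = Nm x s := by
    intro x s
    calc Nm ((1 : G) • x) (A 1 x s) = Nm x ((one_smul G x) ▸ A 1 x s) :=
          (castNm (one_smul G x) (A 1 x s)).symm
      _ = Nm x s := by rw [hA1]
  have hne : ∀ (x : X) (s : L x),
      Set.Nonempty {t : ℝ | ∃ h ∈ H, t = Nm (h • x) (A h x s)} :=
    fun x s => ⟨Nm ((1 : G) • x) (A 1 x s), 1, one_mem H, rfl⟩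
  -- scaling
  have hscale : ∀ (x : X) (c : k) (s : L x), c ≠ 0 → NmH x (c • s) = ‖c‖ * NmH x s := by
    intro x c s hc
    have hcpos : (0 : ℝ) < ‖c‖ := norm_pos_iff.mpr hc
    have hset : {t : ℝ | ∃ h ∈ H, t = Nm (h • x) (A h x (c • s))}
        = (fun t => ‖c‖ * t) '' {t : ℝ | ∃ h ∈ H, t = Nm (h • x) (A h x s)} := by
      ext t
      constructor
      · rintro ⟨h, hh, rfl⟩
        exact ⟨Nm (h • x) (A h x s), ⟨h, hh, rfl⟩, by rw [map_smul, hNmsmul]⟩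
      · rintro ⟨u, ⟨h, hh, rfl⟩, rfl⟩
        exact ⟨h, hh, by rw [map_smul, hNmsmul]⟩
    show sSup _ = _
    rw [hset]
    exact ((OrderIso.mulLeft₀ ‖c‖ hcpos).map_csSup' (hne x s) (hHbdd x s)).symm
  -- translation by elements of H
  have htrans : ∀ g ∈ H, ∀ (x : X) (s : L x), NmH (g • x) (A g x s) = NmH x s := by
    intro g hg x s
    have hset : {t : ℝ | ∃ h ∈ H, t = Nm (h • (g • x)) (A h (g • x) (A g x s))}
        = {t : ℝ | ∃ h ∈ H, t = Nm (h • x) (A h x s)} := by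
      ext t
      constructor
      · rintro ⟨h, hh, rfl⟩
        exact ⟨h * g, mul_mem hh hg, hmulNm h g x s⟩
      · rintro ⟨h, hh, rfl⟩
        refine ⟨h * g⁻¹, mul_mem hh (inv_mem hg), ?_⟩
        rw [hmulNm (h * g⁻¹) g x s, inv_mul_cancel_right]
    show sSup _ = sSup _
    rw [hset]
  have hNmle : ∀ (x : X) (s : L x), Nm x s ≤ NmH x s := fun x s =>
    le_csSup (hHbdd x s) ⟨1, one_mem H, (h1 x s).symm⟩
  constructor
  · -- existence of the constant
    rcases isEmpty_or_nonempty X with hX | hX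
    · exact ⟨0, fun x => isEmptyElim x⟩
    obtain ⟨x₀⟩ := hX
    have : Nontrivial (L x₀) := by
      exact Module.nontrivial_of_finrank_pos (R := k) (by rw [hdim x₀]; norm_num)
    obtain ⟨s₀, hs₀⟩ := exists_ne (0 : L x₀)
    have hNm₀ : Nm x₀ s₀ ≠ 0 := fun h => hs₀ ((hNm0 x₀ s₀).mp h)
    refine ⟨NmH x₀ s₀ / Nm x₀ s₀, ?_⟩
    intro x s hs
    obtain ⟨g, hgK, hgx⟩ := hKtrans x₀ x
    subst hgx
    obtain ⟨c, hc⟩ := (finrank_eq_one_iff_of_nonzero' s₀ hs₀).mp (hdim x₀) ((A g x₀).symm s)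
    have hsc : s = c • A g x₀ s₀ := by
      rw [← map_smul, hc, LinearEquiv.apply_symm_apply]
    have hcne : c ≠ 0 := by
      rintro rfl
      apply hs
      rw [hsc, zero_smul]
    rw [hsc, hscale _ c _ hcne, hNmsmul, htrans g (hKH hgK) x₀ s₀, hKinv g hgK x₀ s₀]
    field_simp
  · -- if the constant is 1
    intro hratio h hh x s
    by_cases hs : s = 0
    · subst hs
      rw [map_zero]
      rw [(hNm0 _ _).mpr rfl, (hNm0 _ _).mpr rfl]
    · have hAs : A h x s ≠ 0 := fun h0 => hs ((A h x).map_eq_zero_iff.mp h0)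
      have hle1 : Nm (h • x) (A h x s) ≤ Nm x s := by
        rw [← hratio x s hs]
        exact le_csSup (hHbdd x s) ⟨h, hh, rfl⟩
      have hle2 : Nm x s ≤ Nm (h • x) (A h x s) := by
        rw [← hratio (h • x) (A h x s) hAs]
        refine le_csSup (hHbdd _ _) ⟨h⁻¹, inv_mem hh, ?_⟩
        rw [hmulNm h⁻¹ h x s, inv_mul_cancel, h1]
      exact le_antisymm hle1 hle2
end
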